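/- arXiv:2107.10605 — 3 statements merged into one kernel-verified Lean document; each statement's English description precedes it below -/
import Mathlib

section
/- Let a ≥ 1, ρ > 0 and γ ≥ 0. If X, Y ⊆ ℝ are compact and X is contained in the closed aρ-neighborhood of Y, then H^γ_{≥ρ}(X) ≤ 2(2a+1)^γ H^γ_{≥ρ}(Y). In particular, H^γ_{≥ρ}(X) ≪_a H^γ_{≥ρ}(Y) with implied constant depending only on a (and γ). -/
open scoped ENNReal

/-- The discrete Hausdorff content at scale `ρ` and dimension `γ`: infimum over
(countable) covers by open balls of diameter at least `ρ`. -/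
noncomputable def dContent {α : Type*} [PseudoMetricSpace α] (ρ γ : ℝ) (X : Set α) : ℝ≥0∞ :=
  ⨅ (C : Set (α × ℝ)) (_ : C.Countable) (_ : ∀ B ∈ C, ρ ≤ B.2)
    (_ : X ⊆ ⋃ B ∈ C, Metric.ball B.1 (B.2 / 2)),
    ∑' B : C, ENNReal.ofReal (B : α × ℝ).2 ^ γ

theorem dContent_le_of_subset_thickening
    (a ρ γ : ℝ) (ha : 1 ≤ a) (hρ : 0 < ρ) (hγ : 0 ≤ γ)
    (X Y : Set ℝ) (hX : IsCompact X) (hY : IsCompact Y)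
    (hXY : X ⊆ {z : ℝ | ∃ y ∈ Y, |z - y| ≤ a * ρ}) :
    dContent ρ γ X ≤ ENNReal.ofReal (2 * (2 * a + 1) ^ γ) * dContent ρ γ Y := by
  set K : ℝ≥0∞ := ENNReal.ofReal (2 * (2 * a + 1) ^ γ) with hKdef
  have hb : (0:ℝ) < 2 * a + 1 := by linarith
  have hbγ : (0:ℝ) < (2 * a + 1) ^ γ := Real.rpow_pos_of_pos hb γ
  have hK0 : K ≠ 0 := by
    rw [hKdef, Ne, ENNReal.ofReal_eq_zero, not_le]; linarith
  have hKtop : K ≠ ⊤ := ENNReal.ofReal_ne_top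
  -- key estimate for each admissible cover of Y
  have key : ∀ C : Set (ℝ × ℝ), C.Countable → (∀ B ∈ C, ρ ≤ B.2) →
      (Y ⊆ ⋃ B ∈ C, Metric.ball B.1 (B.2 / 2)) →
      dContent ρ γ X ≤ K * ∑' B : C, ENNReal.ofReal (B : ℝ × ℝ).2 ^ γ := by
    intro C hc hρC hcov
    set f : ℝ × ℝ → ℝ × ℝ := fun B => (B.1, (2 * a + 1) * B.2) with hfdef
    have hf : Function.Injective f := by
      intro p q h
      simp only [hfdef, Prod.mk.injEq] at h
      exact Prod.ext h.1 (mul_left_cancel₀ (ne_of_gt hb) h.2)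
    have hρC' : ∀ B ∈ f '' C, ρ ≤ B.2 := by
      rintro B ⟨b, hbC, rfl⟩
      have h1 : ρ ≤ b.2 := hρC b hbC
      have : (1:ℝ) * b.2 ≤ (2 * a + 1) * b.2 := by nlinarith
      simpa [hfdef] using le_trans (by linarith) this
    have hcov' : X ⊆ ⋃ B ∈ f '' C, Metric.ball B.1 (B.2 / 2) := by
      intro x hx
      obtain ⟨y, hyY, hxy⟩ := hXY hx
      obtain ⟨b, hbC, hyb⟩ := Set.mem_iUnion₂.1 (hcov hyY)
      have h1 : ρ ≤ b.2 := hρC b hbC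
      rw [Metric.mem_ball, Real.dist_eq] at hyb
      refine Set.mem_iUnion₂.2 ⟨f b, Set.mem_image_of_mem f hbC, ?_⟩
      rw [Metric.mem_ball, Real.dist_eq]
      have htri : |x - b.1| ≤ |x - y| + |y - b.1| := by
        calc |x - b.1| = |(x - y) + (y - b.1)| := by ring_nf
          _ ≤ |x - y| + |y - b.1| := abs_add_le _ _
      have : a * ρ ≤ a * b.2 := by nlinarith
      simp only [hfdef]
      calc |x - b.1| ≤ a * ρ + |y - b.1| := by linarith
        _ < a * b.2 + b.2 / 2 := by linarith
        _ = (2 * a + 1) * b.2 / 2 := by ring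
    -- sum over the enlarged cover
    have hsum : (∑' B : ↥(f '' C), ENNReal.ofReal (B : ℝ × ℝ).2 ^ γ)
        ≤ K * ∑' B : C, ENNReal.ofReal (B : ℝ × ℝ).2 ^ γ := by
      rw [← (Equiv.Set.image f C hf).tsum_eq
        (fun B : ↥(f '' C) => ENNReal.ofReal (B : ℝ × ℝ).2 ^ γ), ← ENNReal.tsum_mul_left]
      refine ENNReal.tsum_le_tsum fun b => ?_
      have hb2 : 0 < (b : ℝ × ℝ).2 := lt_of_lt_of_le hρ (hρC b b.2)
      have : ENNReal.ofReal ((f (b : ℝ × ℝ)).2) ^ γ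
          = ENNReal.ofReal ((2 * a + 1) ^ γ) * ENNReal.ofReal (b : ℝ × ℝ).2 ^ γ := by
        simp only [hfdef]
        rw [ENNReal.ofReal_mul hb.le, ENNReal.mul_rpow_of_nonneg _ _ hγ,
          ENNReal.ofReal_rpow_of_pos hb]
      show ENNReal.ofReal (f (b : ℝ × ℝ)).2 ^ γ ≤ _
      rw [this]
      gcongr
      exact ENNReal.ofReal_le_ofReal (by linarith)
    calc dContent ρ γ X ≤ ∑' B : ↥(f '' C), ENNReal.ofReal (B : ℝ × ℝ).2 ^ γ := by
          refine iInf_le_of_le (f '' C) (iInf_le_of_le (hc.image f)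
            (iInf_le_of_le hρC' (iInf_le _ hcov')))
      _ ≤ _ := hsum
  -- conclude
  conv_rhs => rw [dContent]
  rw [ENNReal.mul_iInf_of_ne hK0 hKtop]
  refine le_iInf fun C => ?_
  rw [ENNReal.mul_iInf_of_ne hK0 hKtop]
  refine le_iInf fun hc => ?_
  rw [ENNReal.mul_iInf_of_ne hK0 hKtop]
  refine le_iInf fun hρC => ?_
  rw [ENNReal.mul_iInf_of_ne hK0 hKtop]
  refine le_iInf fun hcov => ?_
  exact key C hc hρC hcov
end

section
/- Fix an integer r ≥ 2 and 0 < γ₃ < γ₄ < γ₅, and set A = γ₅ − γ₄ + log_r 2 and B = γ₄ − γ₃ − log_r 2, assuming B > 0. Every finite tree Γ in which every node has at most r^{γ₅} children has a subtree Γ' with the property that every node Q of Γ' satisfies |F_{Γ', r^{γ₃}}(Q)| ≥ (|A_{Γ'}(Q)|·B + log_r H_r^{γ₄}(Γ)) / (A + B). -/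
/-- The data `(Γ, h, P)` is a tree of height `N`: there is exactly one node of height
`0` (the root), all heights are at most `N`, the parent of a non-root node lies in the
tree one level up, and every node of height `< N` has a child (i.e. `P(Γ_n) = Γ_{n-1}`
for `1 ≤ n ≤ N`). -/
def IsTree {α : Type*} (N : ℕ) (Γ : Finset α) (h : α → ℕ) (P : α → α) : Prop :=
  (∃! q, q ∈ Γ ∧ h q = 0) ∧
  (∀ q ∈ Γ, h q ≤ N) ∧
  (∀ q ∈ Γ, h q ≠ 0 → P q ∈ Γ ∧ h (P q) = h q - 1) ∧
  (∀ q ∈ Γ, h q < N → ∃ p ∈ Γ, h p = h q + 1 ∧ P p = q)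

/-- The children of a node `q`: the nodes of the tree whose parent is `q`. -/
def children {α : Type*} [DecidableEq α] (Γ : Finset α) (h : α → ℕ) (P : α → α)
    (q : α) : Finset α :=
  Γ.filter fun p => h p ≠ 0 ∧ P p = q

/-- `C` is a cut of the tree `(Γ, h, P)` of height `N`: for every leaf `L`
(node of height `N`), some iterated parent of `L` (possibly `L` itself) lies in `C`. -/
def IsCut {α : Type*} (N : ℕ) (Γ : Finset α) (h : α → ℕ) (P : α → α)
    (C : Finset α) : Prop :=
  C ⊆ Γ ∧ ∀ L ∈ Γ, h L = N → ∃ k ≤ h L, P^[k] L ∈ C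

/-- The `γ`-Hausdorff content of the tree `(Γ, h, P)` of height `N` with base `r`:
the minimum over cuts `C` of `∑_{Q ∈ C} r^{-height(Q) γ}`. -/
noncomputable def treeContent {α : Type*} (N : ℕ) (Γ : Finset α) (h : α → ℕ)
    (P : α → α) (r : ℕ) (γ : ℝ) : ℝ :=
  sInf {v : ℝ | ∃ C : Finset α, IsCut N Γ h P C ∧
    v = ∑ q ∈ C, (r : ℝ) ^ (-(h q : ℝ) * γ)}

/-- The ancestry of a node `Q`: the set `{P^k(Q) : 1 ≤ k ≤ height Q}`. -/
def ancestry {α : Type*} [DecidableEq α] (h : α → ℕ) (P : α → α) (Q : α) : Finset α :=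
  (Finset.Icc 1 (h Q)).image fun k => P^[k] Q

/-- The `c`-fertile ancestors of `Q` in the tree with node set `Γ'`: those ancestors
having at least `c` children in `Γ'`. -/
noncomputable def fertileAnc {α : Type*} [DecidableEq α] (Γ' : Finset α) (h : α → ℕ)
    (P : α → α) (c : ℝ) (Q : α) : Finset α :=
  (ancestry h P Q).filter fun a => c ≤ ((children Γ' h P a).card : ℝ)

/-!
Let `μ q` be the `γ₄`-content of the part of the tree below `q`: it is at most the weight
`r ^ (-h q * γ₄)` of `q`, at most the sum of `μ` over the children of `q`, and the content of the
whole tree is at most `μ root`. Call a child `p` of `q` heavy if `μ p ≥ μ q / (2 |C(q)|)`; the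
heavy children carry at least half of `μ q`. Keep all heavy children if there are at least
`r ^ γ₃` of them, and otherwise only the heaviest one. Passing from a kept child to its parent,
`μ` grows by a factor at most `2 r ^ γ₅` at a fertile parent and at most `2 r ^ γ₃` at any other.
Multiplying along the ancestry of a node `Q` of height `n` with `f` fertile ancestors gives
`H ≤ r ^ (-n γ₄) (2 r ^ γ₅) ^ f (2 r ^ γ₃) ^ (n - f)`, and taking `logb r` gives the claim.
-/

open Finset Real

namespace Finset

variable {ι β : Type*}

lemma sum_biUnion_le_sum_sum [DecidableEq β] (s : Finset ι) (t : ι → Finset β) {f : β → ℝ}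
    (hf : ∀ x, 0 ≤ f x) : ∑ x ∈ s.biUnion t, f x ≤ ∑ i ∈ s, ∑ x ∈ t i, f x := by
  have hU : s.biUnion t = (s.sigma t).image Sigma.snd := by ext; simp
  rw [hU]
  exact (sum_image_le_of_nonneg fun _ _ => hf _).trans_eq (sum_sigma s t fun x => f x.2)

lemma half_le_sum_filter_div_card_le (s : Finset ι) {g : ι → ℝ} {m : ℝ} (hm : 0 ≤ m)
    (hs : m ≤ ∑ i ∈ s, g i) : m / 2 ≤ ∑ i ∈ s with m / (2 * #s) ≤ g i, g i := by
  have hlight : ∑ i ∈ s with ¬ m / (2 * #s) ≤ g i, g i ≤ m / 2 :=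
    calc ∑ i ∈ s with ¬ m / (2 * #s) ≤ g i, g i
        ≤ #{i ∈ s | ¬ m / (2 * #s) ≤ g i} • (m / (2 * #s)) :=
          sum_le_card_nsmul _ _ _ fun i hi => (not_le.mp (mem_filter.mp hi).2).le
      _ ≤ #s * (m / (2 * #s)) := by
          rw [nsmul_eq_mul]
          gcongr
          exact filter_subset _ _
      _ ≤ m / 2 := by
          rcases (#s).eq_zero_or_pos with h0 | hpos
          · simp [h0]; positivity
          · field_simp; rfl
  linarith [sum_filter_add_sum_filter_not s (fun i => m / (2 * #s) ≤ g i) g]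

lemma prod_ite_const_eq_pow_mul_pow {M : Type*} [CommMonoid M] (s : Finset ι) (p : ι → Prop)
    [DecidablePred p] (a b : M) :
    ∏ i ∈ s, (if p i then a else b) = a ^ #(s.filter p) * b ^ (#s - #(s.filter p)) := by
  rw [prod_ite, prod_const, prod_const, ← card_filter_add_card_filter_not p (s := s),
    Nat.add_sub_cancel_left]

end Finset

lemma logb_le_of_le_rpow_mul_pow_mul_pow {b H x y z : ℝ} {f g : ℕ} (hb : 1 < b) (hH : 0 < H)
    (hle : H ≤ b ^ x * (2 * b ^ y) ^ f * (2 * b ^ z) ^ g) :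
    logb b H ≤ x + (logb b 2 + y) * f + (logb b 2 + z) * g := by
  have hb0 : 0 < b := by linarith
  have htwo : ∀ t, 2 * b ^ t = b ^ (logb b 2 + t) := fun t => by
    rw [rpow_add hb0, rpow_logb hb0 hb.ne' two_pos]
  rw [logb_le_iff_le_rpow hb hH, rpow_add hb0, rpow_add hb0, rpow_mul_natCast hb0.le,
    rpow_mul_natCast hb0.le, ← htwo, ← htwo]
  exact hle

section Trees

variable {α : Type*} {N : ℕ} {Γ : Finset α} {h : α → ℕ} {P : α → α}

namespace IsTree

variable (hT : IsTree N Γ h P)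
include hT

lemma exists_mem_height {k : ℕ} (hk : k ≤ N) : ∃ q ∈ Γ, h q = k := by
  induction k with
  | zero => obtain ⟨q, hq, -⟩ := hT.1; exact ⟨q, hq⟩
  | succ k ih =>
    obtain ⟨q, hq, rfl⟩ := ih (by omega)
    obtain ⟨p, hp, hph, -⟩ := hT.2.2.2 q hq (by omega)
    exact ⟨p, hp, hph⟩

lemma iterate_mem {q : α} (hq : q ∈ Γ) {k : ℕ} (hk : k ≤ h q) :
    P^[k] q ∈ Γ ∧ h (P^[k] q) = h q - k := by
  induction k with
  | zero => simpa using hq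
  | succ k ih =>
    obtain ⟨hmem, hh⟩ := ih (by omega)
    rw [Function.iterate_succ_apply']
    obtain ⟨hmem', hh'⟩ := hT.2.2.1 _ hmem (by omega)
    exact ⟨hmem', by omega⟩

lemma iterate_height_eq_root {q root : α} (hq : q ∈ Γ) (hroot : root ∈ Γ) (h0 : h root = 0) :
    P^[h q] q = root := by
  obtain ⟨hmem, hh⟩ := hT.iterate_mem hq le_rfl
  exact hT.1.unique ⟨hmem, by omega⟩ ⟨hroot, h0⟩

lemma injOn_iterate {q : α} (hq : q ∈ Γ) : Set.InjOn (P^[·] q) (Set.Iic (h q)) := by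
  intro a ha b hb hab
  have ha' := (hT.iterate_mem hq ha).2
  have hb' := (hT.iterate_mem hq hb).2
  simp only at hab
  rw [hab] at ha'
  simp only [Set.mem_Iic] at ha hb
  omega

lemma treeContent_pos {r : ℕ} (hr : 0 < r) (γ : ℝ) : 0 < treeContent N Γ h P r γ := by
  set S := {v : ℝ | ∃ C, IsCut N Γ h P C ∧ v = ∑ q ∈ C, (r : ℝ) ^ (-(h q : ℝ) * γ)}
  have hfin : S.Finite := by
    refine ((Γ.powerset : Set (Finset α)).toFinite.image
      fun C => ∑ q ∈ C, (r : ℝ) ^ (-(h q : ℝ) * γ)).subset ?_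
    rintro _ ⟨C, hC, rfl⟩
    exact ⟨C, mem_powerset.mpr hC.1, rfl⟩
  have hne : S.Nonempty := ⟨_, Γ, ⟨subset_rfl, fun L hL _ => ⟨0, Nat.zero_le _, hL⟩⟩, rfl⟩
  obtain ⟨C, hC, hval⟩ := hne.csInf_mem hfin
  obtain ⟨L, hL, hLN⟩ := hT.exists_mem_height le_rfl
  obtain ⟨k, -, hk⟩ := hC.2 L hL hLN
  change 0 < sInf S
  rw [hval]
  exact sum_pos (fun _ _ => by positivity) ⟨_, hk⟩

end IsTree

variable [DecidableEq α]

namespace IsTree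

variable (hT : IsTree N Γ h P)
include hT

lemma height_of_mem_children {p q : α} (hp : p ∈ children Γ h P q) : h p = h q + 1 := by
  obtain ⟨hpΓ, hp0, rfl⟩ := mem_filter.mp hp
  have := (hT.2.2.1 p hpΓ hp0).2
  omega

lemma children_nonempty {q : α} (hq : q ∈ Γ) (hlt : h q < N) :
    (children Γ h P q).Nonempty := by
  obtain ⟨p, hpΓ, hp, rfl⟩ := hT.2.2.2 q hq hlt
  exact ⟨p, mem_filter.mpr ⟨hpΓ, by omega, rfl⟩⟩

lemma card_ancestry {q : α} (hq : q ∈ Γ) : #(ancestry h P q) = h q := by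
  rw [ancestry, card_image_of_injOn ((hT.injOn_iterate hq).mono fun _ hk => (mem_Icc.mp hk).2)]
  simp

lemma prod_ancestry {q : α} (hq : q ∈ Γ) (c : α → ℝ) :
    ∏ a ∈ ancestry h P q, c a = ∏ k ∈ Icc 1 (h q), c (P^[k] q) :=
  prod_image ((hT.injOn_iterate hq).mono fun _ hk => (mem_Icc.mp hk).2)

lemma le_mul_prod_ancestry {f c : α → ℝ} (hc : ∀ q ∈ Γ, 0 ≤ c q)
    (hstep : ∀ q ∈ Γ, h q ≠ 0 → f (P q) ≤ c (P q) * f q) {root Q : α} (hroot : root ∈ Γ)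
    (h0 : h root = 0) (hQ : Q ∈ Γ) : f root ≤ f Q * ∏ a ∈ ancestry h P Q, c a := by
  have key : ∀ k ≤ h Q, f (P^[k] Q) ≤ f Q * ∏ j ∈ Icc 1 k, c (P^[j] Q) := by
    intro k
    induction k with
    | zero => simp
    | succ k ih =>
      intro hk
      obtain ⟨hkΓ, hkh⟩ := hT.iterate_mem hQ (k := k) (by omega)
      rw [prod_Icc_succ_top (by omega), Function.iterate_succ_apply']
      calc f (P (P^[k] Q)) ≤ c (P (P^[k] Q)) * f (P^[k] Q) := hstep _ hkΓ (by omega)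
        _ ≤ c (P (P^[k] Q)) * (f Q * ∏ j ∈ Icc 1 k, c (P^[j] Q)) :=
            mul_le_mul_of_nonneg_left (ih (by omega)) (hc _ (hT.2.2.1 _ hkΓ (by omega)).1)
        _ = _ := by ring
  rw [hT.prod_ancestry hQ, ← hT.iterate_height_eq_root hQ hroot h0]
  exact key _ le_rfl

end IsTree

def selectedSubtree (Γ : Finset α) (h : α → ℕ) (P : α → α) (sel : α → Finset α) :
    Finset α :=
  Γ.filter fun q => ∀ k < h q, P^[k] q ∈ sel (P^[k + 1] q)

section SelectedSubtree

variable {sel : α → Finset α}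

lemma mem_selectedSubtree {q : α} :
    q ∈ selectedSubtree Γ h P sel ↔ q ∈ Γ ∧ ∀ k < h q, P^[k] q ∈ sel (P^[k + 1] q) :=
  mem_filter

lemma selectedSubtree_subset : selectedSubtree Γ h P sel ⊆ Γ :=
  filter_subset _ _

lemma mem_sel_parent_of_mem_selectedSubtree {q : α} (hq : q ∈ selectedSubtree Γ h P sel)
    (h0 : h q ≠ 0) : q ∈ sel (P q) :=
  (mem_selectedSubtree.mp hq).2 0 (by omega)

namespace IsTree

variable (hT : IsTree N Γ h P)
include hT

lemma parent_mem_selectedSubtree {q : α} (hq : q ∈ selectedSubtree Γ h P sel) (h0 : h q ≠ 0) :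
    P q ∈ selectedSubtree Γ h P sel := by
  obtain ⟨hqΓ, hsteps⟩ := mem_selectedSubtree.mp hq
  obtain ⟨hPq, hh⟩ := hT.2.2.1 q hqΓ h0
  refine mem_selectedSubtree.mpr ⟨hPq, fun k hk => ?_⟩
  simpa only [← Function.iterate_succ_apply] using hsteps (k + 1) (by omega)

lemma mem_selectedSubtree_of_mem_sel (hsel : ∀ q ∈ Γ, h q < N → sel q ⊆ children Γ h P q)
    {p q : α} (hq : q ∈ selectedSubtree Γ h P sel) (hlt : h q < N) (hp : p ∈ sel q) :
    p ∈ selectedSubtree Γ h P sel := by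
  have hpc := hsel q (selectedSubtree_subset hq) hlt hp
  obtain ⟨hpΓ, -, hPp⟩ := mem_filter.mp hpc
  have hh := hT.height_of_mem_children hpc
  refine mem_selectedSubtree.mpr ⟨hpΓ, fun k hk => ?_⟩
  cases k with
  | zero => simpa [hPp] using hp
  | succ k =>
    simpa only [Function.iterate_succ_apply, hPp] using (mem_selectedSubtree.mp hq).2 k (by omega)

lemma children_selectedSubtree (hsel : ∀ q ∈ Γ, h q < N → sel q ⊆ children Γ h P q) {q : α}
    (hq : q ∈ selectedSubtree Γ h P sel) (hlt : h q < N) :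
    children (selectedSubtree Γ h P sel) h P q = sel q := by
  ext p
  constructor
  · intro hp
    obtain ⟨hpS, hp0, rfl⟩ := mem_filter.mp hp
    exact mem_sel_parent_of_mem_selectedSubtree hpS hp0
  · intro hp
    have hpc := hsel q (selectedSubtree_subset hq) hlt hp
    exact mem_filter.mpr ⟨hT.mem_selectedSubtree_of_mem_sel hsel hq hlt hp, (mem_filter.mp hpc).2⟩

lemma isTree_selectedSubtree
    (hsel : ∀ q ∈ Γ, h q < N → sel q ⊆ children Γ h P q ∧ (sel q).Nonempty) :
    IsTree N (selectedSubtree Γ h P sel) h P := by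
  have hsub : ∀ q ∈ Γ, h q < N → sel q ⊆ children Γ h P q := fun q hq hlt => (hsel q hq hlt).1
  refine ⟨?_, fun q hq => hT.2.1 q (selectedSubtree_subset hq),
    fun q hq h0 => ⟨hT.parent_mem_selectedSubtree hq h0,
      (hT.2.2.1 q (selectedSubtree_subset hq) h0).2⟩, fun q hq hlt => ?_⟩
  · obtain ⟨root, ⟨hroot, h0⟩, huniq⟩ := hT.1
    exact ⟨root, ⟨mem_selectedSubtree.mpr ⟨hroot, by simp [h0]⟩, h0⟩,
      fun q hq => huniq q ⟨selectedSubtree_subset hq.1, hq.2⟩⟩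
  · obtain ⟨p, hp⟩ := (hsel q (selectedSubtree_subset hq) hlt).2
    have hpc := hsub q (selectedSubtree_subset hq) hlt hp
    exact ⟨p, hT.mem_selectedSubtree_of_mem_sel hsub hq hlt hp, hT.height_of_mem_children hpc,
      (mem_filter.mp hpc).2.2⟩

end IsTree

end SelectedSubtree

section Content

/-- `cutContent Γ h P w k q` is the least `w`-weight of a cut of the `k` levels below `q`. -/
noncomputable def cutContent (Γ : Finset α) (h : α → ℕ) (P : α → α) (w : α → ℝ) :
    ℕ → α → ℝ
  | 0, q => w q
  | k + 1, q => min (w q) (∑ p ∈ children Γ h P q, cutContent Γ h P w k p)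

noncomputable def nodeContent (N : ℕ) (Γ : Finset α) (h : α → ℕ) (P : α → α) (w : α → ℝ)
    (q : α) : ℝ :=
  cutContent Γ h P w (N - h q) q

lemma nodeContent_le_weight (w : α → ℝ) (q : α) : nodeContent N Γ h P w q ≤ w q := by
  unfold nodeContent
  cases N - h q with
  | zero => exact le_rfl
  | succ k => exact min_le_left _ _

namespace IsTree

variable (hT : IsTree N Γ h P)
include hT

lemma nodeContent_le_sum_children (w : α → ℝ) {q : α} (hlt : h q < N) :
    nodeContent N Γ h P w q ≤ ∑ p ∈ children Γ h P q, nodeContent N Γ h P w p := by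
  obtain ⟨k, hk⟩ : ∃ k, N - h q = k + 1 := ⟨N - h q - 1, by omega⟩
  rw [nodeContent, hk, cutContent]
  refine (min_le_right _ _).trans_eq (sum_congr rfl fun p hp => ?_)
  rw [nodeContent, show N - h p = k by have := hT.height_of_mem_children hp; omega]

lemma nodeContent_pos {w : α → ℝ} (hw : ∀ q, 0 < w q) {q : α} (hq : q ∈ Γ) :
    0 < nodeContent N Γ h P w q := by
  suffices ∀ k, ∀ q ∈ Γ, h q + k = N → 0 < cutContent Γ h P w k q from
    this _ q hq (by have := hT.2.1 q hq; omega)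
  intro k
  induction k with
  | zero => exact fun q _ _ => hw q
  | succ k ih =>
    intro q hq hk
    refine lt_min (hw q) (sum_pos (fun p hp => ih p (mem_filter.mp hp).1 ?_)
      (hT.children_nonempty hq (by omega)))
    have := hT.height_of_mem_children hp
    omega

lemma exists_cut_sum_le_cutContent {w : α → ℝ} (hw : ∀ q, 0 ≤ w q) (k : ℕ) :
    ∀ q ∈ Γ, h q + k = N → ∃ C ⊆ Γ, (∀ L ∈ Γ, h L = N → P^[k] L = q → ∃ j ≤ k, P^[j] L ∈ C) ∧
      ∑ x ∈ C, w x ≤ cutContent Γ h P w k q := by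
  induction k with
  | zero =>
    intro q hq _
    exact ⟨{q}, by simpa, fun L _ _ hL => ⟨0, le_rfl, by simpa using hL⟩, by simp [cutContent]⟩
  | succ k ih =>
    intro q hq hk
    rcases le_total (w q) (∑ p ∈ children Γ h P q, cutContent Γ h P w k p) with hle | hle
    · exact ⟨{q}, by simpa, fun L _ _ hL => ⟨k + 1, le_rfl, by simpa using hL⟩,
        by simp [cutContent, hle]⟩
    have hchild : ∀ p ∈ children Γ h P q, ∃ C ⊆ Γ,
        (∀ L ∈ Γ, h L = N → P^[k] L = p → ∃ j ≤ k, P^[j] L ∈ C) ∧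
          ∑ x ∈ C, w x ≤ cutContent Γ h P w k p := fun p hp =>
      ih p (mem_filter.mp hp).1 (by have := hT.height_of_mem_children hp; omega)
    choose! C hCΓ hCcut hCsum using hchild
    refine ⟨(children Γ h P q).biUnion C, biUnion_subset.mpr hCΓ, fun L hL hLN hPL => ?_, ?_⟩
    · obtain ⟨hpΓ, hph⟩ := hT.iterate_mem hL (k := k) (by omega)
      have hp : P^[k] L ∈ children Γ h P q :=
        mem_filter.mpr ⟨hpΓ, by omega, by rwa [← Function.iterate_succ_apply' P k L]⟩
      obtain ⟨j, hj, hjC⟩ := hCcut _ hp L hL hLN rfl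
      exact ⟨j, by omega, mem_biUnion.mpr ⟨_, hp, hjC⟩⟩
    · rw [cutContent, min_eq_right hle]
      exact (sum_biUnion_le_sum_sum _ _ hw).trans (sum_le_sum hCsum)

lemma treeContent_le_nodeContent {r : ℕ} {γ : ℝ} {root : α} (hroot : root ∈ Γ)
    (h0 : h root = 0) :
    treeContent N Γ h P r γ ≤ nodeContent N Γ h P (fun q => (r : ℝ) ^ (-(h q : ℝ) * γ)) root := by
  have hw : ∀ q, 0 ≤ (r : ℝ) ^ (-(h q : ℝ) * γ) := fun q => by positivity
  obtain ⟨C, hCΓ, hCcut, hCsum⟩ := hT.exists_cut_sum_le_cutContent hw N root hroot (by omega)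
  have hC : IsCut N Γ h P C := ⟨hCΓ, fun L hL hLN => by
    obtain ⟨j, hj, hjC⟩ := hCcut L hL hLN (hLN ▸ hT.iterate_height_eq_root hL hroot h0)
    exact ⟨j, hLN ▸ hj, hjC⟩⟩
  have hbdd : BddBelow
      {v : ℝ | ∃ C, IsCut N Γ h P C ∧ v = ∑ q ∈ C, (r : ℝ) ^ (-(h q : ℝ) * γ)} := by
    refine ⟨0, ?_⟩
    rintro _ ⟨C', -, rfl⟩
    exact sum_nonneg fun q _ => hw q
  refine (csInf_le hbdd ⟨C, hC, rfl⟩).trans ?_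
  simpa [nodeContent, h0] using hCsum
end IsTree

end Content

section Selection

variable (Γ h P) (μ : α → ℝ)

noncomputable def heavyChildren (q : α) : Finset α :=
  (children Γ h P q).filter fun p => μ q / (2 * #(children Γ h P q)) ≤ μ p

noncomputable def heaviestChild (q : α) : α :=
  if hne : (heavyChildren Γ h P μ q).Nonempty then (exists_max_image _ μ hne).choose else q

noncomputable def selectChildren (c : ℝ) (q : α) : Finset α :=
  if c ≤ #(heavyChildren Γ h P μ q) then heavyChildren Γ h P μ q
  else {heaviestChild Γ h P μ q}

variable {Γ h P μ}

lemma half_le_sum_heavyChildren {q : α} (hμ0 : 0 ≤ μ q)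
    (hμ : μ q ≤ ∑ p ∈ children Γ h P q, μ p) : μ q / 2 ≤ ∑ p ∈ heavyChildren Γ h P μ q, μ p :=
  half_le_sum_filter_div_card_le _ hμ0 hμ

lemma heavyChildren_nonempty {q : α} (hμ0 : 0 < μ q)
    (hμ : μ q ≤ ∑ p ∈ children Γ h P q, μ p) : (heavyChildren Γ h P μ q).Nonempty := by
  refine nonempty_of_sum_ne_zero (f := μ) (ne_of_gt ?_)
  linarith [half_le_sum_heavyChildren hμ0.le hμ]

lemma heaviestChild_spec {q : α} (hne : (heavyChildren Γ h P μ q).Nonempty) :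
    heaviestChild Γ h P μ q ∈ heavyChildren Γ h P μ q ∧
      ∀ p ∈ heavyChildren Γ h P μ q, μ p ≤ μ (heaviestChild Γ h P μ q) := by
  rw [heaviestChild, dif_pos hne]
  exact (exists_max_image _ μ hne).choose_spec

lemma selectChildren_subset_heavyChildren {c : ℝ} {q : α}
    (hne : (heavyChildren Γ h P μ q).Nonempty) :
    selectChildren Γ h P μ c q ⊆ heavyChildren Γ h P μ q := by
  unfold selectChildren
  split_ifs
  · exact subset_rfl
  · exact singleton_subset_iff.mpr (heaviestChild_spec hne).1

lemma selectChildren_nonempty {c : ℝ} {q : α} (hne : (heavyChildren Γ h P μ q).Nonempty) :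
    (selectChildren Γ h P μ c q).Nonempty := by
  unfold selectChildren
  split_ifs
  exacts [hne, singleton_nonempty _]

lemma le_mul_of_mem_selectChildren {c K : ℝ} {p q : α} (hμ0 : 0 < μ q)
    (hμ : μ q ≤ ∑ p ∈ children Γ h P q, μ p) (hK : #(children Γ h P q) ≤ K)
    (hp : p ∈ selectChildren Γ h P μ c q) :
    μ q ≤ (if c ≤ #(selectChildren Γ h P μ c q) then 2 * K else 2 * c) * μ p := by
  have hne := heavyChildren_nonempty hμ0 hμ
  obtain ⟨hpC, hpμ⟩ := mem_filter.mp (selectChildren_subset_heavyChildren hne hp)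
  have hC : (0 : ℝ) < #(children Γ h P q) := by exact_mod_cast card_pos.mpr ⟨p, hpC⟩
  have hμp : 0 ≤ μ p := le_trans (by positivity) hpμ
  have hheavy : μ q ≤ 2 * K * μ p :=
    calc μ q ≤ 2 * #(children Γ h P q) * μ p := by
          rwa [div_le_iff₀ (by positivity), mul_comm] at hpμ
      _ ≤ 2 * K * μ p := by gcongr
  unfold selectChildren at hp ⊢
  split_ifs at hp ⊢ with hfew
  · exact hheavy
  · exact hheavy
  · obtain rfl := mem_singleton.mp hp
    obtain ⟨-, hmax⟩ := heaviestChild_spec hne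
    calc μ q ≤ 2 * ∑ p ∈ heavyChildren Γ h P μ q, μ p := by
          linarith [half_le_sum_heavyChildren hμ0.le hμ]
      _ ≤ 2 * (#(heavyChildren Γ h P μ q) * μ (heaviestChild Γ h P μ q)) := by
          rw [← nsmul_eq_mul]
          gcongr
          exact sum_le_card_nsmul _ _ _ hmax
      _ ≤ 2 * c * μ (heaviestChild Γ h P μ q) := by
          rw [mul_assoc]
          gcongr
          exact (not_le.mp hfew).le

end Selection

namespace IsTree

variable (hT : IsTree N Γ h P)
include hT

lemma selectChildren_nodeContent {w : α → ℝ} (hw : ∀ q, 0 < w q) (c : ℝ) {q : α} (hq : q ∈ Γ)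
    (hlt : h q < N) :
    selectChildren Γ h P (nodeContent N Γ h P w) c q ⊆ children Γ h P q ∧
      (selectChildren Γ h P (nodeContent N Γ h P w) c q).Nonempty := by
  have hne := heavyChildren_nonempty (hT.nodeContent_pos hw hq)
    (hT.nodeContent_le_sum_children w hlt)
  exact ⟨(selectChildren_subset_heavyChildren hne).trans (filter_subset _ _),
    selectChildren_nonempty hne⟩

end IsTree

section FertileSubtree

variable {r : ℕ} {γ₃ γ₄ γ₅ : ℝ}

noncomputable def fertileSubtree (N : ℕ) (Γ : Finset α) (h : α → ℕ) (P : α → α) (r : ℕ)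
    (γ₃ γ₄ : ℝ) : Finset α :=
  selectedSubtree Γ h P
    (selectChildren Γ h P (nodeContent N Γ h P fun q => (r : ℝ) ^ (-(h q : ℝ) * γ₄)) (r ^ γ₃))

lemma fertileSubtree_subset : fertileSubtree N Γ h P r γ₃ γ₄ ⊆ Γ :=
  selectedSubtree_subset

namespace IsTree

variable (hT : IsTree N Γ h P) (hr : 0 < r)
include hT hr

lemma isTree_fertileSubtree : IsTree N (fertileSubtree N Γ h P r γ₃ γ₄) h P :=
  hT.isTree_selectedSubtree fun _ hq hlt =>
    hT.selectChildren_nodeContent (fun _ => by positivity) _ hq hlt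

lemma nodeContent_parent_le_of_mem_fertileSubtree
    (hch : ∀ q ∈ Γ, (#(children Γ h P q) : ℝ) ≤ (r : ℝ) ^ γ₅) {q : α}
    (hq : q ∈ fertileSubtree N Γ h P r γ₃ γ₄) (h0 : h q ≠ 0) :
    nodeContent N Γ h P (fun q => (r : ℝ) ^ (-(h q : ℝ) * γ₄)) (P q) ≤
      (if (r : ℝ) ^ γ₃ ≤ #(children (fertileSubtree N Γ h P r γ₃ γ₄) h P (P q))
        then 2 * (r : ℝ) ^ γ₅ else 2 * (r : ℝ) ^ γ₃) *
      nodeContent N Γ h P (fun q => (r : ℝ) ^ (-(h q : ℝ) * γ₄)) q := by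
  have hw : ∀ q, 0 < (r : ℝ) ^ (-(h q : ℝ) * γ₄) := fun _ => by positivity
  have hT' := hT.isTree_fertileSubtree (γ₃ := γ₃) (γ₄ := γ₄) hr
  obtain ⟨hPq, hPqh⟩ := hT'.2.2.1 q hq h0
  have hlt : h (P q) < N := by have := hT'.2.1 q hq; omega
  have hPqΓ := fertileSubtree_subset hPq
  rw [fertileSubtree, hT.children_selectedSubtree
    (fun _ hq hlt => (hT.selectChildren_nodeContent hw _ hq hlt).1) hPq hlt]
  exact le_mul_of_mem_selectChildren (hT.nodeContent_pos hw hPqΓ)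
    (hT.nodeContent_le_sum_children _ hlt) (hch _ hPqΓ)
    (mem_sel_parent_of_mem_selectedSubtree hq h0)

lemma treeContent_le_of_mem_fertileSubtree
    (hch : ∀ q ∈ Γ, (#(children Γ h P q) : ℝ) ≤ (r : ℝ) ^ γ₅) {Q : α}
    (hQ : Q ∈ fertileSubtree N Γ h P r γ₃ γ₄) :
    treeContent N Γ h P r γ₄ ≤ (r : ℝ) ^ (-(h Q : ℝ) * γ₄) *
      (2 * (r : ℝ) ^ γ₅) ^ #(fertileAnc (fertileSubtree N Γ h P r γ₃ γ₄) h P (r ^ γ₃) Q) *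
      (2 * (r : ℝ) ^ γ₃) ^
        (h Q - #(fertileAnc (fertileSubtree N Γ h P r γ₃ γ₄) h P (r ^ γ₃) Q)) := by
  have hT' := hT.isTree_fertileSubtree (γ₃ := γ₃) (γ₄ := γ₄) hr
  obtain ⟨root, ⟨hroot, h0⟩, -⟩ := hT'.1
  calc treeContent N Γ h P r γ₄
      ≤ nodeContent N Γ h P (fun q => (r : ℝ) ^ (-(h q : ℝ) * γ₄)) root :=
        hT.treeContent_le_nodeContent (fertileSubtree_subset hroot) h0
    _ ≤ nodeContent N Γ h P (fun q => (r : ℝ) ^ (-(h q : ℝ) * γ₄)) Q *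
          ∏ a ∈ ancestry h P Q,
            if (r : ℝ) ^ γ₃ ≤ #(children (fertileSubtree N Γ h P r γ₃ γ₄) h P a)
            then 2 * (r : ℝ) ^ γ₅ else 2 * (r : ℝ) ^ γ₃ :=
        hT'.le_mul_prod_ancestry (fun _ _ => by positivity)
          (fun _ hq h0 => hT.nodeContent_parent_le_of_mem_fertileSubtree hr hch hq h0) hroot h0 hQ
    _ ≤ (r : ℝ) ^ (-(h Q : ℝ) * γ₄) *
          ∏ a ∈ ancestry h P Q,
            if (r : ℝ) ^ γ₃ ≤ #(children (fertileSubtree N Γ h P r γ₃ γ₄) h P a)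
            then 2 * (r : ℝ) ^ γ₅ else 2 * (r : ℝ) ^ γ₃ := by
        gcongr
        exact nodeContent_le_weight _ Q
    _ = _ := by rw [prod_ite_const_eq_pow_mul_pow, hT'.card_ancestry hQ, mul_assoc]; rfl

end IsTree

end FertileSubtree

end Trees

theorem subtree_with_fertile_ancestry_general
    {α : Type*} [DecidableEq α] (r : ℕ) (hr : 2 ≤ r)
    (γ₃ γ₄ γ₅ : ℝ) (h34 : γ₃ < γ₄) (h45 : γ₄ < γ₅)
    (N : ℕ) (Γ : Finset α) (h : α → ℕ) (P : α → α)
    (hT : IsTree N Γ h P)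
    (hch : ∀ q ∈ Γ, ((children Γ h P q).card : ℝ) ≤ (r : ℝ) ^ γ₅) :
    ∃ Γ' ⊆ Γ, IsTree N Γ' h P ∧
      ∀ Q ∈ Γ',
        (((ancestry h P Q).card : ℝ) * (γ₄ - γ₃ - Real.logb r 2) +
            Real.logb r (treeContent N Γ h P r γ₄)) /
          ((γ₅ - γ₄ + Real.logb r 2) + (γ₄ - γ₃ - Real.logb r 2)) ≤
        ((fertileAnc Γ' h P ((r : ℝ) ^ γ₃) Q).card : ℝ) := by
  have hr0 : 0 < r := by omega
  have hT' := hT.isTree_fertileSubtree (γ₃ := γ₃) (γ₄ := γ₄) hr0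
  refine ⟨_, fertileSubtree_subset, hT', fun Q hQ => ?_⟩
  have hlog := logb_le_of_le_rpow_mul_pow_mul_pow (by exact_mod_cast hr)
    (hT.treeContent_pos hr0 γ₄) (hT.treeContent_le_of_mem_fertileSubtree hr0 hch hQ)
  have hf : #(fertileAnc (fertileSubtree N Γ h P r γ₃ γ₄) h P (r ^ γ₃) Q) ≤ h Q :=
    hT'.card_ancestry hQ ▸ card_filter_le _ _
  rw [Nat.cast_sub hf] at hlog
  rw [hT'.card_ancestry hQ, div_le_iff₀ (by linarith)]
  linarith

theorem subtree_with_fertile_ancestry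
    {α : Type*} [DecidableEq α] (r : ℕ) (hr : 2 ≤ r)
    (γ₃ γ₄ γ₅ : ℝ) (h3 : 0 < γ₃) (h34 : γ₃ < γ₄) (h45 : γ₄ < γ₅)
    (hB : 0 < γ₄ - γ₃ - Real.logb r 2)
    (N : ℕ) (Γ : Finset α) (h : α → ℕ) (P : α → α)
    (hT : IsTree N Γ h P)
    (hch : ∀ q ∈ Γ, ((children Γ h P q).card : ℝ) ≤ (r : ℝ) ^ γ₅) :
    ∃ Γ' ⊆ Γ, IsTree N Γ' h P ∧
      ∀ Q ∈ Γ',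
        (((ancestry h P Q).card : ℝ) * (γ₄ - γ₃ - Real.logb r 2) +
            Real.logb r (treeContent N Γ h P r γ₄)) /
          ((γ₅ - γ₄ + Real.logb r 2) + (γ₄ - γ₃ - Real.logb r 2)) ≤
        ((fertileAnc Γ' h P ((r : ℝ) ^ γ₃) Q).card : ℝ) :=
  subtree_with_fertile_ancestry_general r hr γ₃ γ₄ γ₅ h34 h45 N Γ h P hT hch
end

section
/- Let r < s be multiplicatively independent positive integers with r ≥ 2, let m ∈ ℕ, set β = log s, m' = ⌊m log r / log s⌋, α = log(r^m / s^{m'}) ∈ [0,β), and let R : [0,β) → [0,β) be the rotation x ↦ x + α (mod β). Then for all n ∈ ℕ₀: (I) R^n(0) + (nm)'·log s = nm·log r, where (nm)' = ⌊nm log r / log s⌋; and (II) ((n+1)m)' = (nm)' + m' if R^n(0) + α < β, while ((n+1)m)' = (nm)' + m' + 1 if R^n(0) + α > β. -/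
/-- `n' = ⌊n log r / log s⌋`. -/
noncomputable def nprime (r s n : ℕ) : ℕ :=
  (⌊(n : ℝ) * Real.log r / Real.log s⌋).toNat

theorem rotation_encodes_prime_exponents
    (r s : ℕ) (hr : 2 ≤ r) (hrs : r < s)
    (hind : Irrational (Real.log r / Real.log s))
    (m : ℕ) (hm : 0 < m) :
    let β : ℝ := Real.log s
    let α : ℝ := Real.log ((r : ℝ) ^ m / (s : ℝ) ^ nprime r s m)
    let R : ℝ → ℝ := fun x => Int.fract ((x + α) / β) * β
    (0 ≤ α ∧ α < β) ∧
    ∀ n : ℕ,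
      (R^[n] 0 + (nprime r s (n * m) : ℝ) * Real.log s = ((n * m : ℕ) : ℝ) * Real.log r) ∧
      (R^[n] 0 + α < β → nprime r s ((n + 1) * m) = nprime r s (n * m) + nprime r s m) ∧
      (β < R^[n] 0 + α → nprime r s ((n + 1) * m) = nprime r s (n * m) + nprime r s m + 1) := by
  intro β α R
  have hs1 : (1:ℝ) < (s:ℝ) := by exact_mod_cast (show 1 < s by omega)
  have hr1 : (1:ℝ) < (r:ℝ) := by exact_mod_cast (show 1 < r by omega)
  have hβ : 0 < β := Real.log_pos hs1
  have hLr : 0 < Real.log r := Real.log_pos hr1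
  set L : ℝ := Real.log r / Real.log s with hLdef
  have hL0 : 0 ≤ L := le_of_lt (div_pos hLr hβ)
  have hLβ : L * β = Real.log r := div_mul_cancel₀ _ (ne_of_gt hβ)
  have hnpZ : ∀ k : ℕ, (nprime r s k : ℤ) = ⌊(k:ℝ) * L⌋ := by
    intro k
    unfold nprime
    rw [mul_div_assoc]
    exact Int.toNat_of_nonneg (Int.floor_nonneg.mpr (mul_nonneg k.cast_nonneg hL0))
  have hnpR : ∀ k : ℕ, (nprime r s k : ℝ) = (⌊(k:ℝ) * L⌋ : ℤ) := by
    intro k; exact_mod_cast congrArg (Int.cast : ℤ → ℝ) (hnpZ k)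
  have hαsub : α = (m:ℝ) * Real.log r - (nprime r s m : ℝ) * Real.log s := by
    show Real.log ((r : ℝ) ^ m / (s : ℝ) ^ nprime r s m) = _
    rw [Real.log_div (pow_ne_zero _ (by positivity)) (pow_ne_zero _ (by positivity)),
      Real.log_pow, Real.log_pow]
  have hα : α = Int.fract ((m:ℝ) * L) * β := by
    rw [hαsub, hnpR m, Int.fract, sub_mul, mul_assoc, hLβ]
  have key : ∀ a b : ℝ, Int.fract (Int.fract a + Int.fract b) = Int.fract (a + b) := by
    intro a b
    rw [show Int.fract a + Int.fract b
        = a + b + ((-(⌊a⌋ + ⌊b⌋) : ℤ) : ℝ) by rw [Int.fract, Int.fract]; push_cast; ring,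
      Int.fract_add_intCast]
  have hiter : ∀ n : ℕ, R^[n] 0 = Int.fract ((n:ℝ) * (m:ℝ) * L) * β := by
    intro n
    induction n with
    | zero => simp
    | succ n ih =>
      rw [Function.iterate_succ_apply', ih]
      show Int.fract ((Int.fract ((n:ℝ) * (m:ℝ) * L) * β + α) / β) * β = _
      rw [hα, show (Int.fract ((n:ℝ) * (m:ℝ) * L) * β + Int.fract ((m:ℝ) * L) * β) / β
          = Int.fract ((n:ℝ) * (m:ℝ) * L) + Int.fract ((m:ℝ) * L) by
            rw [← add_mul, mul_div_cancel_right₀ _ (ne_of_gt hβ)],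
        key, show (n:ℝ) * (m:ℝ) * L + (m:ℝ) * L = ((n:ℕ)+1 : ℝ) * (m:ℝ) * L by push_cast; ring]
      push_cast
      ring_nf
  have hfg2 : ∀ a b : ℝ, Int.fract a + Int.fract b < 2 := fun a b => by
    have := Int.fract_lt_one a; have := Int.fract_lt_one b; linarith
  have hα0 : 0 ≤ α := by
    rw [hα]; exact mul_nonneg (Int.fract_nonneg _) hβ.le
  have hαβ : α < β := by
    rw [hα]
    calc Int.fract ((m:ℝ) * L) * β < 1 * β :=
          mul_lt_mul_of_pos_right (Int.fract_lt_one _) hβ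
      _ = β := one_mul β
  refine ⟨⟨hα0, hαβ⟩, ?_⟩
  intro n
  set a : ℝ := (n:ℝ) * (m:ℝ) * L with ha
  set b : ℝ := (m:ℝ) * L with hb
  have hcast : ((n * m : ℕ) : ℝ) * L = a := by push_cast; ring
  have hcast' : (((n + 1) * m : ℕ) : ℝ) * L = a + b := by push_cast; ring
  have hsum : ∀ c : ℤ, (c:ℝ) ≤ Int.fract a + Int.fract b →
      Int.fract a + Int.fract b < c + 1 →
      nprime r s ((n + 1) * m) = nprime r s (n * m) + nprime r s m + c.toNat := by
    intro c hc1 hc2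
    have hfloor : ⌊a + b⌋ = ⌊a⌋ + ⌊b⌋ + c := by
      rw [show a + b = ((⌊a⌋ + ⌊b⌋ : ℤ) : ℝ) + (Int.fract a + Int.fract b) by
          rw [Int.fract, Int.fract]; push_cast; ring, Int.floor_intCast_add]
      have : ⌊Int.fract a + Int.fract b⌋ = c := Int.floor_eq_iff.mpr ⟨hc1, by push_cast; linarith⟩
      omega
    have hc0 : 0 ≤ c := by
      have h0 : (0:ℝ) ≤ Int.fract a + Int.fract b :=
        add_nonneg (Int.fract_nonneg _) (Int.fract_nonneg _)
      have : (0:ℝ) < (c:ℝ) + 1 := lt_of_le_of_lt h0 hc2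
      exact_mod_cast by exact_mod_cast Int.lt_add_one_iff.mp (by exact_mod_cast this)
    have hz : (nprime r s ((n + 1) * m) : ℤ) = (nprime r s (n * m) : ℤ) + nprime r s m + c := by
      rw [hnpZ, hnpZ, hnpZ, hcast, hcast', hfloor]
    omega
  refine ⟨?_, ?_, ?_⟩
  · rw [hiter n, hnpR (n * m), hcast, Int.fract, sub_mul, mul_assoc, hLβ]
    push_cast
    ring
  · intro h
    rw [hiter n, hα] at h
    have hfg : Int.fract a + Int.fract b < 1 := by nlinarith
    have := hsum 0 (by
      push_cast
      exact add_nonneg (Int.fract_nonneg _) (Int.fract_nonneg _)) (by push_cast; linarith)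
    simpa using this
  · intro h
    rw [hiter n, hα] at h
    have hfg : 1 < Int.fract a + Int.fract b := by nlinarith
    have := hsum 1 (by push_cast; linarith) (by push_cast; linarith [hfg2 a b])
    simpa using this
end
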